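/- Let k have characteristic 2, G = ⟨σ⟩ cyclic of order 4 acting on V = V_3 as above, Δ = σ−1, and A = k[N^G(x_1), N^G_H(x_2), x_3]. Then the set {1, x_1, x_2, x_1^2, Δ(x_1^3), Δ(x_1^3 x_2)} freely generates ker(Δ^3) over A, and the set {1, x_1, x_2, x_1^2, x_1x_2, x_1^3, x_1^2x_2, x_1^3x_2} freely generates ker(Δ^4) = k[V] over A. -/

import Mathlib

/-!
Write `x, y, z` for `X 0, X 1, X 2`. In characteristic 2, `N^G(x₁) = x(x+y)(x+z)(x+y+z)` is monic
of degree 4 in `x` over `k[y,z]`, and `N^G_H(x₂) = y² + yz` is monic of degree 2 in `y` over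
`k[z]`; division with remainder by these two monic polynomials shows that `k[V]` is free over `A`
with basis `xⁱyʲ` (`i < 4`, `j < 2`). Since `σ` fixes `A`, `Δ` is `A`-linear, and in
characteristic 2 we have `Δ³ = 1 + σ + σ² + σ³` and `Δ⁴ = σ⁴ - 1 = 0`. In coordinates,
`Δ³ f = 0` kills the `x³y`-coordinate of `f` and gives `z ∣ c N₂` for its `x³`-coordinate
`c`. As `z` is prime and `A` is closed under exact division in `k[V]` (`1` is a basis vector),
`c = z t` with `t ∈ A`, and `f` is then an explicit `A`-combination of
`1, x, y, x², Δ(x³), Δ(x³y)`.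
-/

open MvPolynomial

/-- The action of the generator `σ` of `G = C₄` on `k[V₃] = k[x₁,x₂,x₃]`
(char 2): `σx₁ = x₁+x₂`, `σx₂ = x₂+x₃`, `σx₃ = x₃` (variables `X 0, X 1, X 2`). -/
noncomputable def sigmaC4 (K : Type*) [CommSemiring K] :
    MvPolynomial (Fin 3) K →ₐ[K] MvPolynomial (Fin 3) K :=
  aeval ![X 0 + X 1, X 1 + X 2, X 2]

/-- `Δ = σ − 1` on `k[V₃]`. -/
noncomputable def deltaC4 (K : Type*) [CommRing K] (f : MvPolynomial (Fin 3) K) :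
    MvPolynomial (Fin 3) K :=
  sigmaC4 K f - f

namespace Polynomial

variable {S : Type*} [CommRing S]

theorem eq_zero_of_sum_mul_pow_monic {P : S[X]} (hP : P.Monic) {r : ℕ → S[X]}
    (hr : ∀ m, (r m).degree < P.degree) {N : ℕ}
    (h : ∑ m ∈ Finset.range N, r m * P ^ m = 0) : ∀ m < N, r m = 0 := by
  induction N generalizing r with
  | zero => simp
  | succ N ih =>
    set q := ∑ m ∈ Finset.range N, r (m + 1) * P ^ m
    have hsplit : r 0 + P * q = 0 := by
      rw [← h, Finset.sum_range_succ', Finset.mul_sum, add_comm]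
      simp only [pow_zero, mul_one, pow_succ]
      congr 1
      exact Finset.sum_congr rfl fun m _ => by ring
    obtain ⟨hq, hr0⟩ := div_modByMonic_unique (f := 0) q (r 0) hP ⟨hsplit, hr 0⟩
    rw [zero_divByMonic] at hq
    rw [zero_modByMonic] at hr0
    rintro (_ | m) hm
    · exact hr0.symm
    · exact ih (r := fun m => r (m + 1)) (fun m => hr _) hq.symm m (by omega)

theorem eq_zero_of_sum_comp_mul_X_pow {P : S[X]} (hP : P.Monic) {d : ℕ} (hd : P.natDegree = d)
    (p : Fin d → S[X]) (h : ∑ i, (p i).comp P * X ^ (i : ℕ) = 0) : p = 0 := by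
  nontriviality S
  obtain ⟨M, hM⟩ : ∃ M, ∀ i, (p i).natDegree < M :=
    ⟨(Finset.univ.sup fun i => (p i).natDegree) + 1, fun i =>
      Nat.lt_succ_of_le (Finset.le_sup (f := fun i => (p i).natDegree) (Finset.mem_univ i))⟩
  have hexp :
      ∑ m ∈ Finset.range M, (∑ i : Fin d, C ((p i).coeff m) * X ^ (i : ℕ)) * P ^ m = 0 := by
    rw [← h]
    simp_rw [comp, eval₂_eq_sum_range' C (hM _), Finset.sum_mul]
    rw [Finset.sum_comm]
    exact Finset.sum_congr rfl fun i _ => Finset.sum_congr rfl fun m _ => by ring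
  have hdeg (m : ℕ) : (∑ i : Fin d, C ((p i).coeff m) * X ^ (i : ℕ)).degree < P.degree := by
    rw [degree_eq_natDegree hP.ne_zero, hd]
    exact degree_sum_fin_lt _
  funext i
  ext m
  by_cases hm : m < M
  · have := congrArg (coeff · i) (eq_zero_of_sum_mul_pow_monic hP hdeg hexp m hm)
    simpa [finsetSum_coeff, coeff_C_mul_X_pow, Fin.val_inj] using this
  · simpa using coeff_eq_zero_of_natDegree_lt (by have := hM i; omega)

theorem eq_zero_of_sum_map_comp_mul_X_pow {B : Type*} [CommRing B] (φ : B →+* S)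
    {ι : Type*} [Fintype ι] {s : ι → S}
    (hs : ∀ b : ι → B, ∑ j, φ (b j) * s j = 0 → b = 0)
    {P : S[X]} (hP : P.Monic) {d : ℕ} (hd : P.natDegree = d) (q : Fin d × ι → B[X])
    (h : ∑ k, ((q k).map φ).comp P * C (s k.2) * X ^ (k.1 : ℕ) = 0) : q = 0 := by
  have hp := eq_zero_of_sum_comp_mul_X_pow hP hd (fun i => ∑ j, (q (i, j)).map φ * C (s j)) (by
    rw [← h, Fintype.sum_prod_type]
    simp [sum_comp, mul_comp, Finset.sum_mul])
  funext ⟨i, j⟩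
  ext m
  have := hs (fun j => (q (i, j)).coeff m) (by
    simpa [finsetSum_coeff, mul_comm] using congrArg (coeff · m) (congrFun hp i))
  simpa using congrFun this j

end Polynomial

theorem Subalgebra.mem_of_mul_mem_of_basis {R S : Type*} [CommRing R] [CommRing S] [IsDomain S]
    [Algebra R S] {A : Subalgebra R S} {ι : Type*} (b : Module.Basis ι A S) {i₀ : ι}
    (hb : b i₀ = 1) {a t : S} (ha : a ∈ A) (ha0 : a ≠ 0) (hat : a * t ∈ A) : t ∈ A := by
  classical
  have hrepr : b.repr t = Finsupp.single i₀ (b.repr t i₀) := by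
    ext i
    by_cases hi : i = i₀
    · subst hi; simp
    · have h : (⟨a, ha⟩ : A) • t = (⟨a * t, hat⟩ : A) • b i₀ := by
        rw [hb]; simp [Subalgebra.smul_def]
      have := congrArg (fun v => b.repr v i) h
      simp only [map_smul, Finsupp.smul_apply, b.repr_self, Finsupp.single_apply,
        if_neg (Ne.symm hi), smul_eq_mul, mul_zero, mul_eq_zero] at this
      simpa [Ne.symm hi] using this.resolve_left fun h0 => ha0 (congrArg Subtype.val h0)
  have ht : t = b.repr t i₀ • b i₀ := by
    rw [← b.repr_symm_single, ← hrepr, b.repr.symm_apply_apply]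
  rw [ht, hb, Subalgebra.smul_def, smul_eq_mul, mul_one]
  exact (b.repr t i₀).2

section HsopBasis

variable (K : Type*) [CommRing K]

/- With `x, y, z = X 0, X 1, X 2`: `normX` is `N^G(x₁)` expanded in characteristic 2
(`prod_iterate_sigmaC4_X_zero`) and `relNormY` is `N^G_H(x₂)`; with `z` they form the
homogeneous system of parameters (hsop) generating the paper's `A`. -/
noncomputable def normX : MvPolynomial (Fin 3) K :=
  X 0 ^ 4 + (X 1 ^ 2 + X 1 * X 2 + X 2 ^ 2) * X 0 ^ 2 + (X 1 ^ 2 * X 2 + X 1 * X 2 ^ 2) * X 0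

noncomputable def relNormY : MvPolynomial (Fin 3) K :=
  X 1 ^ 2 + X 1 * X 2

noncomputable abbrev hsopAlgebra : Subalgebra K (MvPolynomial (Fin 3) K) :=
  Algebra.adjoin K {normX K, relNormY K, X 2}

noncomputable def hsopHom : MvPolynomial (Fin 3) K →ₐ[K] MvPolynomial (Fin 3) K :=
  aeval ![normX K, relNormY K, X 2]

theorem range_hsopHom : (hsopHom K).range = hsopAlgebra K := by
  rw [hsopHom, ← Algebra.adjoin_range_eq_range_aeval, Matrix.range_cons,
    Matrix.range_cons_cons_empty, Set.singleton_union]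

/- `finSuccEquiv` splits off the first variable: `k[x,y,z] = k[y,z][x]` and `k[y,z] = k[z][y]`,
where `X 0, X 1` now stand for `y, z`. So `normXPoly` is `normX` as a polynomial in `x`,
`relNormYPoly` is `relNormY` as a polynomial in `y`, and `relNormYHom` is `(y, z) ↦ (N₂, z)`. -/
noncomputable def relNormYHom : MvPolynomial (Fin 2) K →ₐ[K] MvPolynomial (Fin 2) K :=
  aeval ![X 0 ^ 2 + X 0 * X 1, X 1]

noncomputable def relNormYPoly : Polynomial (MvPolynomial (Fin 1) K) :=
  Polynomial.X ^ 2 + Polynomial.C (X 0) * Polynomial.X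

noncomputable def normXPoly : Polynomial (MvPolynomial (Fin 2) K) :=
  Polynomial.X ^ 4 + Polynomial.C (X 0 ^ 2 + X 0 * X 1 + X 1 ^ 2) * Polynomial.X ^ 2
    + Polynomial.C (X 0 ^ 2 * X 1 + X 0 * X 1 ^ 2) * Polynomial.X

variable {K}

theorem relNormYPoly_monic : (relNormYPoly K).Monic := by
  unfold relNormYPoly; monicity!

theorem natDegree_relNormYPoly [Nontrivial K] : (relNormYPoly K).natDegree = 2 := by
  unfold relNormYPoly; compute_degree!

theorem normXPoly_monic : (normXPoly K).Monic := by
  unfold normXPoly; monicity!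

theorem natDegree_normXPoly [Nontrivial K] : (normXPoly K).natDegree = 4 := by
  unfold normXPoly; compute_degree!

theorem finSuccEquiv_X_one {n : ℕ} :
    finSuccEquiv K (n + 1) (X 1) = Polynomial.C (X 0) :=
  finSuccEquiv_X_succ (j := 0)

theorem finSuccEquiv_X_two :
    finSuccEquiv K 2 (X 2) = Polynomial.C (X 1) :=
  finSuccEquiv_X_succ (j := 1)

theorem finSuccEquiv_relNormYHom (β : MvPolynomial (Fin 2) K) :
    finSuccEquiv K 1 (relNormYHom K β) = (finSuccEquiv K 1 β).comp (relNormYPoly K) := by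
  have h : (finSuccEquiv K 1).toAlgHom.comp (relNormYHom K)
      = ((Polynomial.aeval (relNormYPoly K)).restrictScalars K).comp
          (finSuccEquiv K 1).toAlgHom := by
    apply MvPolynomial.algHom_ext
    intro i
    fin_cases i <;> simp [relNormYHom, relNormYPoly, finSuccEquiv_X_one, finSuccEquiv_X_zero]
  simpa [Polynomial.comp_eq_aeval] using congr($h β)

theorem finSuccEquiv_hsopHom (t : MvPolynomial (Fin 3) K) :
    finSuccEquiv K 2 (hsopHom K t)
      = ((finSuccEquiv K 2 t).map (relNormYHom K : MvPolynomial (Fin 2) K →+* _)).comp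
          (normXPoly K) := by
  have h : (finSuccEquiv K 2).toAlgHom.comp (hsopHom K)
      = ((Polynomial.aeval (normXPoly K)).restrictScalars K).comp
          ((Polynomial.mapAlgHom (relNormYHom K)).comp (finSuccEquiv K 2).toAlgHom) := by
    apply MvPolynomial.algHom_ext
    intro i
    fin_cases i <;> simp [hsopHom, relNormYHom, normXPoly, normX, relNormY, finSuccEquiv_X_zero,
      finSuccEquiv_X_one, finSuccEquiv_X_two]
  simpa [Polynomial.comp_eq_aeval] using congr($h t)

theorem relNormYHom_sum_mul_X_pow_eq_zero (b : Fin 2 → MvPolynomial (Fin 2) K)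
    (h : ∑ j, relNormYHom K (b j) * X 0 ^ (j : ℕ) = 0) : b = 0 := by
  nontriviality K
  have := Polynomial.eq_zero_of_sum_comp_mul_X_pow relNormYPoly_monic natDegree_relNormYPoly
    (fun j => finSuccEquiv K 1 (b j)) (by
      rw [← map_zero (finSuccEquiv K 1), ← h, map_sum]
      simp [finSuccEquiv_relNormYHom, finSuccEquiv_X_zero])
  funext j
  simpa using congrFun this j

variable (K) in
noncomputable def hsopMonomial (k : Fin 4 × Fin 2) : MvPolynomial (Fin 3) K :=
  X 0 ^ (k.1 : ℕ) * X 1 ^ (k.2 : ℕ)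

theorem hsopHom_sum_mul_hsopMonomial_eq_zero (b : Fin 4 × Fin 2 → MvPolynomial (Fin 3) K)
    (h : ∑ k, hsopHom K (b k) * hsopMonomial K k = 0) : b = 0 := by
  nontriviality K
  have hs : ∀ β : Fin 2 → MvPolynomial (Fin 2) K,
      ∑ j, (relNormYHom K).toRingHom (β j) * X 0 ^ (j : ℕ) = 0 → β = 0 :=
    relNormYHom_sum_mul_X_pow_eq_zero
  have hsum : ∑ k : Fin 4 × Fin 2,
      ((finSuccEquiv K 2 (b k)).map (relNormYHom K).toRingHom).comp (normXPoly K)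
        * Polynomial.C (X 0 ^ (k.2 : ℕ)) * Polynomial.X ^ (k.1 : ℕ) = 0 := by
    rw [← map_zero (finSuccEquiv K 2), ← h, map_sum]
    refine Finset.sum_congr rfl fun k _ => ?_
    simp only [hsopMonomial, map_mul, map_pow, finSuccEquiv_hsopHom, finSuccEquiv_X_zero,
      finSuccEquiv_X_one, AlgHom.toRingHom_eq_coe]
    ring
  have := Polynomial.eq_zero_of_sum_map_comp_mul_X_pow _ hs normXPoly_monic natDegree_normXPoly
    (fun k => finSuccEquiv K 2 (b k)) hsum
  funext k
  simpa using congrFun this k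

theorem linearIndependent_hsopMonomial :
    LinearIndependent (hsopAlgebra K) (hsopMonomial K) := by
  rw [Fintype.linearIndependent_iff]
  intro g hg k
  have hrange : ∀ k, ∃ t, hsopHom K t = g k := fun k =>
    (AlgHom.mem_range _).mp (by rw [range_hsopHom]; exact (g k).2)
  choose b hb using hrange
  have hb0 := hsopHom_sum_mul_hsopMonomial_eq_zero b (by
    simpa only [hb, Subalgebra.smul_def, smul_eq_mul] using hg)
  ext
  simp [← hb, hb0]

theorem normX_mem : normX K ∈ hsopAlgebra K := Algebra.subset_adjoin (by simp)
theorem relNormY_mem : relNormY K ∈ hsopAlgebra K := Algebra.subset_adjoin (by simp)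
theorem X_two_mem : (X 2 : MvPolynomial (Fin 3) K) ∈ hsopAlgebra K :=
  Algebra.subset_adjoin (by simp)

local notation "hsopSpan" => Submodule.span (hsopAlgebra K) (Set.range (hsopMonomial K))

theorem mul_mem_span_hsopMonomial {a v : MvPolynomial (Fin 3) K} (ha : a ∈ hsopAlgebra K)
    (hv : v ∈ hsopSpan) : a * v ∈ hsopSpan :=
  Submodule.smul_mem _ (⟨a, ha⟩ : hsopAlgebra K) hv

theorem hsopMonomial_mem_span (k : Fin 4 × Fin 2) : hsopMonomial K k ∈ hsopSpan :=
  Submodule.subset_span ⟨k, rfl⟩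

theorem X_zero_mul_hsopMonomial_mem_span (k : Fin 4 × Fin 2) :
    X 0 * hsopMonomial K k ∈ hsopSpan := by
  obtain ⟨⟨i, hi⟩, j⟩ := k
  rcases Nat.lt_or_ge i 3 with hi3 | hi3
  · convert hsopMonomial_mem_span (⟨i + 1, by omega⟩, j) using 1
    simp only [hsopMonomial]; ring
  · obtain rfl : i = 3 := by omega
    have h : X 0 * hsopMonomial K (⟨3, hi⟩, j) = normX K * hsopMonomial K (⟨0, by omega⟩, j)
        - (relNormY K + X 2 ^ 2) * hsopMonomial K (⟨2, by omega⟩, j)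
        - relNormY K * X 2 * hsopMonomial K (⟨1, by omega⟩, j) := by
      simp only [hsopMonomial, normX, relNormY]; ring
    rw [h]
    refine sub_mem (sub_mem ?_ ?_) ?_ <;>
      refine mul_mem_span_hsopMonomial ?_ (hsopMonomial_mem_span _)
    exacts [normX_mem, add_mem relNormY_mem (pow_mem X_two_mem 2), mul_mem relNormY_mem X_two_mem]

theorem X_one_mul_hsopMonomial_mem_span (k : Fin 4 × Fin 2) :
    X 1 * hsopMonomial K k ∈ hsopSpan := by
  obtain ⟨i, j⟩ := k
  fin_cases j
  · convert hsopMonomial_mem_span (i, 1) using 1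
    simp [hsopMonomial]; ring
  · have h : X 1 * hsopMonomial K (i, ⟨1, by omega⟩)
        = relNormY K * hsopMonomial K (i, ⟨0, by omega⟩)
          - X 2 * hsopMonomial K (i, ⟨1, by omega⟩) := by
      simp only [hsopMonomial, relNormY]; ring
    rw [h]
    exact sub_mem (mul_mem_span_hsopMonomial relNormY_mem (hsopMonomial_mem_span _))
      (mul_mem_span_hsopMonomial X_two_mem (hsopMonomial_mem_span _))

theorem mul_X_mem_span_hsopMonomial {v : MvPolynomial (Fin 3) K} (hv : v ∈ hsopSpan) (i : Fin 3) :
    v * X i ∈ hsopSpan := by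
  induction hv using Submodule.span_induction with
  | mem _ hv =>
    obtain ⟨k, rfl⟩ := hv
    rw [mul_comm]
    fin_cases i
    exacts [X_zero_mul_hsopMonomial_mem_span k, X_one_mul_hsopMonomial_mem_span k,
      mul_mem_span_hsopMonomial X_two_mem (hsopMonomial_mem_span k)]
  | zero => simp
  | add _ _ _ _ hv hw => rw [add_mul]; exact add_mem hv hw
  | smul a _ _ hv => rw [smul_mul_assoc]; exact Submodule.smul_mem _ a hv

theorem span_hsopMonomial : hsopSpan = ⊤ := by
  refine Submodule.eq_top_iff'.mpr fun f => ?_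
  induction f using MvPolynomial.induction_on with
  | C a =>
    simpa [hsopMonomial] using mul_mem_span_hsopMonomial (Subalgebra.algebraMap_mem _ a)
      (hsopMonomial_mem_span (K := K) (0, 0))
  | add p q hp hq => exact add_mem hp hq
  | mul_X p i hp => exact mul_X_mem_span_hsopMonomial hp i

noncomputable def f4Index : Fin 8 ≃ Fin 4 × Fin 2 :=
  Equiv.ofBijective ![(0, 0), (1, 0), (0, 1), (2, 0), (1, 1), (3, 0), (2, 1), (3, 1)] (by decide)

variable (K) in
noncomputable def hsopBasis : Module.Basis (Fin 8) (hsopAlgebra K) (MvPolynomial (Fin 3) K) :=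
  (Module.Basis.mk linearIndependent_hsopMonomial span_hsopMonomial.ge).reindex f4Index.symm

theorem coe_hsopBasis : ⇑(hsopBasis K)
    = ![1, X 0, X 1, X 0 ^ 2, X 0 * X 1, X 0 ^ 3, X 0 ^ 2 * X 1, X 0 ^ 3 * X 1] := by
  funext c
  fin_cases c <;> simp [hsopBasis, f4Index, hsopMonomial]

end HsopBasis

section Delta

variable {K : Type*} [CommRing K]

@[simp] theorem sigmaC4_X_zero : sigmaC4 K (X 0) = X 0 + X 1 := by simp [sigmaC4]
@[simp] theorem sigmaC4_X_one : sigmaC4 K (X 1) = X 1 + X 2 := by simp [sigmaC4]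
@[simp] theorem sigmaC4_X_two : sigmaC4 K (X 2) = X 2 := by simp [sigmaC4]

theorem X_one_mul_sigmaC4_X_one :
    X 1 * sigmaC4 K (X 1) = relNormY K := by
  simp [relNormY]
  ring

variable (K) in
noncomputable def kerDeltaCubeGens : Fin 6 → MvPolynomial (Fin 3) K :=
  ![1, X 0, X 1, X 0 ^ 2, deltaC4 K (X 0 ^ 3), deltaC4 K (X 0 ^ 3 * X 1)]

variable [CharP K 2]

theorem prod_iterate_sigmaC4_X_zero :
    ∏ i ∈ Finset.range 4, (⇑(sigmaC4 K))^[i] (X 0) = normX K := by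
  -- `reduce_mod_char!` reads the characteristic of `k[V]` off a hypothesis
  have : CharP (MvPolynomial (Fin 3) K) 2 := inferInstance
  simp [Finset.prod_range_succ, normX]
  ring_nf
  reduce_mod_char!

theorem sigmaC4_comp_hsopHom : (sigmaC4 K).comp (hsopHom K) = hsopHom K := by
  have : CharP (MvPolynomial (Fin 3) K) 2 := inferInstance
  apply MvPolynomial.algHom_ext
  intro i
  fin_cases i <;> simp [hsopHom, normX, relNormY] <;> ring_nf <;> reduce_mod_char!

theorem sigmaC4_eq_self_of_mem {a : MvPolynomial (Fin 3) K} (ha : a ∈ hsopAlgebra K) :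
    sigmaC4 K a = a := by
  rw [← range_hsopHom] at ha
  obtain ⟨t, rfl⟩ := (AlgHom.mem_range _).mp ha
  exact congr($sigmaC4_comp_hsopHom t)

variable (K) in
noncomputable def deltaLinear : Module.End (hsopAlgebra K) (MvPolynomial (Fin 3) K) where
  toFun := deltaC4 K
  map_add' f g := by simp only [deltaC4, map_add]; ring
  map_smul' a f := by
    simp only [deltaC4, Subalgebra.smul_def, smul_eq_mul, map_mul, sigmaC4_eq_self_of_mem a.2,
      RingHom.id_apply]
    ring

theorem deltaC4_iterate_eq_pow_apply (n : ℕ) (f : MvPolynomial (Fin 3) K) :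
    (deltaC4 K)^[n] f = (deltaLinear K ^ n) f := by
  rw [Module.End.pow_apply]; rfl

theorem deltaC4_iterate_three (f : MvPolynomial (Fin 3) K) :
    (deltaC4 K)^[3] f
      = f + sigmaC4 K f + sigmaC4 K (sigmaC4 K f) + sigmaC4 K (sigmaC4 K (sigmaC4 K f)) := by
  have : CharP (MvPolynomial (Fin 3) K) 2 := inferInstance
  simp only [Function.iterate_succ, Function.iterate_zero, Function.comp_apply, id, deltaC4,
    map_sub]
  ring_nf
  reduce_mod_char!

theorem sigmaC4_sigmaC4_sigmaC4_sigmaC4 (f : MvPolynomial (Fin 3) K) :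
    sigmaC4 K (sigmaC4 K (sigmaC4 K (sigmaC4 K f))) = f := by
  have : CharP (MvPolynomial (Fin 3) K) 2 := inferInstance
  have h : (sigmaC4 K).comp ((sigmaC4 K).comp ((sigmaC4 K).comp (sigmaC4 K))) = AlgHom.id K _ := by
    apply MvPolynomial.algHom_ext
    intro i
    fin_cases i <;> simp <;> ring_nf <;> reduce_mod_char!
  exact congr($h f)

theorem deltaC4_iterate_four (f : MvPolynomial (Fin 3) K) : (deltaC4 K)^[4] f = 0 := by
  rw [Function.iterate_succ_apply', deltaC4_iterate_three, deltaC4]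
  simp only [map_add, sigmaC4_sigmaC4_sigmaC4_sigmaC4]
  ring

theorem deltaC4_iterate_three_hsopBasis (c : Fin 8) :
    (deltaC4 K)^[3] (hsopBasis K c) = ![0, 0, 0, 0, X 2 ^ 2, relNormY K * X 2, X 2 ^ 3,
      X 2 ^ 2 * X 0 ^ 2 + X 2 ^ 3 * X 0 + relNormY K * X 2 * X 1
        + (relNormY K * X 2 ^ 2 + X 2 ^ 4)] c := by
  have : CharP (MvPolynomial (Fin 3) K) 2 := inferInstance
  rw [deltaC4_iterate_three, coe_hsopBasis]
  fin_cases c <;> simp [relNormY] <;> ring_nf <;> reduce_mod_char!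

theorem deltaC4_X_zero_pow_three :
    deltaC4 K (X 0 ^ 3) = X 0 ^ 2 * X 1 + X 2 * (X 0 * X 1) + relNormY K * X 0
      + (relNormY K + X 2 ^ 2) * X 1 + relNormY K * X 2 := by
  have : CharP (MvPolynomial (Fin 3) K) 2 := inferInstance
  simp [deltaC4, relNormY]
  ring_nf
  reduce_mod_char!

theorem deltaC4_X_zero_pow_three_mul_X_one :
    deltaC4 K (X 0 ^ 3 * X 1) = X 2 * X 0 ^ 3 + relNormY K * (X 0 * X 1)
      + relNormY K * X 0 ^ 2 + relNormY K * X 2 * X 1 + relNormY K ^ 2 := by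
  have : CharP (MvPolynomial (Fin 3) K) 2 := inferInstance
  simp [deltaC4, relNormY]
  ring_nf
  reduce_mod_char!

theorem deltaC4_iterate_three_kerDeltaCubeGens (i : Fin 6) :
    (deltaC4 K)^[3] (kerDeltaCubeGens K i) = 0 := by
  fin_cases i
  · simpa [kerDeltaCubeGens, coe_hsopBasis] using deltaC4_iterate_three_hsopBasis (K := K) 0
  · simpa [kerDeltaCubeGens, coe_hsopBasis] using deltaC4_iterate_three_hsopBasis (K := K) 1
  · simpa [kerDeltaCubeGens, coe_hsopBasis] using deltaC4_iterate_three_hsopBasis (K := K) 2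
  · simpa [kerDeltaCubeGens, coe_hsopBasis] using deltaC4_iterate_three_hsopBasis (K := K) 3
  · simpa [kerDeltaCubeGens, ← Function.iterate_succ_apply] using
      deltaC4_iterate_four (K := K) (X 0 ^ 3)
  · simpa [kerDeltaCubeGens, ← Function.iterate_succ_apply] using
      deltaC4_iterate_four (K := K) (X 0 ^ 3 * X 1)

end Delta

section Kernel

variable {K : Type*} [CommRing K] [IsDomain K]

theorem X_two_dvd_of_dvd_mul_relNormY {a : MvPolynomial (Fin 3) K}
    (h : X 2 ∣ a * relNormY K) : X 2 ∣ a := by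
  refine (X_prime.dvd_or_dvd h).resolve_right fun hN => ?_
  have h1 : (X 2 : MvPolynomial (Fin 3) K) ∣ X 1 ^ 2 := by
    simpa [relNormY] using dvd_sub hN (dvd_mul_left (X 2) (X 1))
  exact absurd (X_prime.dvd_of_dvd_pow h1) (by rw [X_dvd_X]; decide)

variable [CharP K 2]

theorem linearIndependent_kerDeltaCubeGens :
    LinearIndependent (hsopAlgebra K) (kerDeltaCubeGens K) := by
  rw [Fintype.linearIndependent_iff]
  intro g hg
  let N : hsopAlgebra K := ⟨relNormY K, relNormY_mem⟩
  let Z : hsopAlgebra K := ⟨X 2, X_two_mem⟩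
  -- the relation in the coordinates of `hsopBasis`
  have hw := Fintype.linearIndependent_iff.mp (hsopBasis K).linearIndependent
    ![g 0 + g 4 * N * Z + g 5 * N ^ 2, g 1 + g 4 * N, g 2 + g 4 * (N + Z ^ 2) + g 5 * N * Z,
      g 3 + g 5 * N, g 4 * Z + g 5 * N, g 5 * Z, g 4, 0] (by
    rw [← hg]
    simp [Fin.sum_univ_eight, Fin.sum_univ_six, kerDeltaCubeGens, coe_hsopBasis,
      Subalgebra.smul_def, deltaC4_X_zero_pow_three, deltaC4_X_zero_pow_three_mul_X_one, N, Z]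
    ring)
  have hZ : Z ≠ 0 := fun h => X_ne_zero (R := K) 2 (congrArg Subtype.val h)
  have h4 : g 4 = 0 := by simpa using hw 6
  have h5 : g 5 = 0 := by simpa [hZ] using hw 5
  intro i
  fin_cases i
  · simpa [h4, h5] using hw 0
  · simpa [h4, h5] using hw 1
  · simpa [h4, h5] using hw 2
  · simpa [h4, h5] using hw 3
  · exact h4
  · exact h5

theorem hsopBasis_repr_of_deltaC4_iterate_three_eq_zero {f : MvPolynomial (Fin 3) K}
    (hf : (deltaC4 K)^[3] f = 0) :
    (hsopBasis K).repr f 7 = 0 ∧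
      ((hsopBasis K).repr f 4 : MvPolynomial (Fin 3) K) * X 2
        + ((hsopBasis K).repr f 5 : MvPolynomial (Fin 3) K) * relNormY K
        + ((hsopBasis K).repr f 6 : MvPolynomial (Fin 3) K) * X 2 ^ 2 = 0 := by
  let N : hsopAlgebra K := ⟨relNormY K, relNormY_mem⟩
  let Z : hsopAlgebra K := ⟨X 2, X_two_mem⟩
  set c := (hsopBasis K).repr f with hc
  have hΔf : (deltaC4 K)^[3] f = ∑ i, c i • (deltaC4 K)^[3] (hsopBasis K i) := by
    simp only [deltaC4_iterate_eq_pow_apply]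
    conv_lhs => rw [← (hsopBasis K).sum_repr f, ← hc]
    simp only [map_sum, map_smul]
  -- the coordinates of `Δ³ f` in `hsopBasis`
  have hw := Fintype.linearIndependent_iff.mp (hsopBasis K).linearIndependent
    ![c 4 * Z ^ 2 + c 5 * N * Z + c 6 * Z ^ 3 + c 7 * (N * Z ^ 2 + Z ^ 4), c 7 * Z ^ 3,
      c 7 * N * Z, c 7 * Z ^ 2, 0, 0, 0, 0] (by
    rw [← hf, hΔf]
    simp only [deltaC4_iterate_three_hsopBasis]
    simp [Fin.sum_univ_eight, coe_hsopBasis, Subalgebra.smul_def, N, Z]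
    ring)
  have hZ : Z ≠ 0 := fun h => X_ne_zero (R := K) 2 (congrArg Subtype.val h)
  have hc7 : c 7 = 0 := by simpa [hZ] using hw 3
  refine ⟨hc7, ?_⟩
  have h0 := congrArg Subtype.val (hw 0)
  simp only [hc7, N, Z, Matrix.cons_val_zero, Subalgebra.coe_add, Subalgebra.coe_mul,
    SubmonoidClass.coe_pow, Subalgebra.coe_zero, zero_mul, add_zero] at h0
  have h1 : (X 2 : MvPolynomial (Fin 3) K) * ((c 4 : MvPolynomial (Fin 3) K) * X 2
      + (c 5 : MvPolynomial (Fin 3) K) * relNormY K + (c 6 : MvPolynomial (Fin 3) K) * X 2 ^ 2)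
        = 0 := by
    linear_combination h0
  simpa [X_ne_zero] using h1

theorem mem_span_kerDeltaCubeGens_of_deltaC4_iterate_three_eq_zero
    {f : MvPolynomial (Fin 3) K} (hf : (deltaC4 K)^[3] f = 0) :
    f ∈ Submodule.span (hsopAlgebra K) (Set.range (kerDeltaCubeGens K)) := by
  have : CharP (MvPolynomial (Fin 3) K) 2 := inferInstance
  obtain ⟨hc7, hrel⟩ := hsopBasis_repr_of_deltaC4_iterate_three_eq_zero hf
  set c := (hsopBasis K).repr f with hc
  obtain ⟨t, ht⟩ : X 2 ∣ (c 5 : MvPolynomial (Fin 3) K) :=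
    X_two_dvd_of_dvd_mul_relNormY
      ⟨-((c 4 : MvPolynomial (Fin 3) K) + (c 6 : MvPolynomial (Fin 3) K) * X 2),
        by linear_combination hrel⟩
  have htA : t ∈ hsopAlgebra K := Subalgebra.mem_of_mul_mem_of_basis (hsopBasis K) (i₀ := 0)
    (by simp [coe_hsopBasis]) X_two_mem (X_ne_zero 2) (ht ▸ (c 5).2)
  have hc4 : (c 4 : MvPolynomial (Fin 3) K)
      = t * relNormY K + (c 6 : MvPolynomial (Fin 3) K) * X 2 := by
    have h0 : (X 2 : MvPolynomial (Fin 3) K) * ((c 4 : MvPolynomial (Fin 3) K)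
        + (t * relNormY K + (c 6 : MvPolynomial (Fin 3) K) * X 2)) = 0 := by
      rw [ht] at hrel; linear_combination hrel
    rw [← CharTwo.neg_eq (t * relNormY K + (c 6 : MvPolynomial (Fin 3) K) * X 2)]
    exact eq_neg_of_add_eq_zero_left ((mul_eq_zero.mp h0).resolve_left (X_ne_zero 2))
  let N : hsopAlgebra K := ⟨relNormY K, relNormY_mem⟩
  let Z : hsopAlgebra K := ⟨X 2, X_two_mem⟩
  let T : hsopAlgebra K := ⟨t, htA⟩
  rw [Submodule.mem_span_range_iff_exists_fun]
  refine ⟨![c 0 + c 6 * N * Z + T * N ^ 2, c 1 + c 6 * N, c 2 + c 6 * (N + Z ^ 2) + T * N * Z,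
    c 3 + T * N, c 6, T], ?_⟩
  conv_rhs => rw [← (hsopBasis K).sum_repr f, ← hc]
  simp [Fin.sum_univ_eight, Fin.sum_univ_six, kerDeltaCubeGens, coe_hsopBasis,
    Subalgebra.smul_def, deltaC4_X_zero_pow_three, deltaC4_X_zero_pow_three_mul_X_one, hc7, hc4,
    ht, N, Z, T]
  ring_nf
  reduce_mod_char!

end Kernel

/-- For `char k = 2`, `G = C₄` acting on `V₃`, and
`A = k[N^G(x₁), N^G_H(x₂), x₃]`: the set `{1, x₁, x₂, x₁², Δ(x₁³), Δ(x₁³x₂)}`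
freely generates `ker(Δ³)` over `A`, and `{1, x₁, x₂, x₁², x₁x₂, x₁³, x₁²x₂, x₁³x₂}`
freely generates `ker(Δ⁴) = k[V]` over `A`. -/
theorem K3_K4_free_over_A_C4
    {K : Type*} [Field K] [CharP K 2]
    (N₁ N₂ : MvPolynomial (Fin 3) K)
    (hN₁ : N₁ = ∏ i ∈ Finset.range 4, (⇑(sigmaC4 K))^[i] (X 0))
    (hN₂ : N₂ = X 1 * sigmaC4 K (X 1))
    (F₃ : Fin 6 → MvPolynomial (Fin 3) K)
    (hF₃ : F₃ = ![1, X 0, X 1, X 0 ^ 2, deltaC4 K (X 0 ^ 3), deltaC4 K (X 0 ^ 3 * X 1)])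
    (F₄ : Fin 8 → MvPolynomial (Fin 3) K)
    (hF₄ : F₄ = ![1, X 0, X 1, X 0 ^ 2, X 0 * X 1, X 0 ^ 3, X 0 ^ 2 * X 1, X 0 ^ 3 * X 1]) :
    -- `F₃` lies in `ker(Δ³)`, generates it over `A`, and is `A`-independent
    (∀ i : Fin 6, (deltaC4 K)^[3] (F₃ i) = 0) ∧
    (∀ f : MvPolynomial (Fin 3) K, (deltaC4 K)^[3] f = 0 →
        f ∈ Submodule.span (Algebra.adjoin K {N₁, N₂, X 2}) (Set.range F₃)) ∧
    LinearIndependent (Algebra.adjoin K {N₁, N₂, X 2}) F₃ ∧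
    -- `ker(Δ⁴)` is all of `k[V]`, generated freely over `A` by `F₄`
    (∀ f : MvPolynomial (Fin 3) K, (deltaC4 K)^[4] f = 0) ∧
    (∀ f : MvPolynomial (Fin 3) K,
        f ∈ Submodule.span (Algebra.adjoin K {N₁, N₂, X 2}) (Set.range F₄)) ∧
    LinearIndependent (Algebra.adjoin K {N₁, N₂, X 2}) F₄ := by
  subst hN₁ hN₂ hF₃ hF₄
  rw [prod_iterate_sigmaC4_X_zero, X_one_mul_sigmaC4_X_one, ← coe_hsopBasis]
  refine ⟨deltaC4_iterate_three_kerDeltaCubeGens,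
    fun f hf => mem_span_kerDeltaCubeGens_of_deltaC4_iterate_three_eq_zero hf,
    linearIndependent_kerDeltaCubeGens, deltaC4_iterate_four, fun f => ?_,
    (hsopBasis K).linearIndependent⟩
  rw [(hsopBasis K).span_eq]
  trivial
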